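/- Let η : ℝ³ → ℝ³ be the axial rotation Killing field η(x) = (−x₂, x₁, 0), with squared norm λ(x) = x₁² + x₂², and let U = {x ∈ ℝ³ : x₁² + x₂² ≠ 0}. Let ω : U → ℝ be a C² function that is axially symmetric, i.e. ⟨η(x), ∇ω(x)⟩ = 0 for all x ∈ U. Define the vector field S(x) = (1/λ(x)) (η(x) × ∇ω(x)), where × is the cross product and ∇ω is the gradient of ω. Then S satisfies on U: (i) ⟨S(x), η(x)⟩ = 0; (ii) ∑_{a=1}^{3} ∂_a S_a(x) = 0; (iii) the Lie bracket [η, S] vanishes, i.e. ∑_b η_b(x) ∂_b S_a(x) − ∑_b S_b(x) ∂_b η_a(x) = 0 for all a. -/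

import Mathlib

/-- Cross product of two vectors in `ℝ³`. -/
def cross3 (u v : Fin 3 → ℝ) : Fin 3 → ℝ :=
  ![u 1 * v 2 - u 2 * v 1, u 2 * v 0 - u 0 * v 2, u 0 * v 1 - u 1 * v 0]

/-- The axial rotation Killing field `η(x) = (−x₂, x₁, 0)` on `ℝ³`. -/
def axialEta (x : Fin 3 → ℝ) : Fin 3 → ℝ := ![-(x 1), x 0, 0]

/-- The squared norm `λ(x) = x₁² + x₂²` of the axial Killing field. -/
def axialLam (x : Fin 3 → ℝ) : ℝ := x 0 ^ 2 + x 1 ^ 2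

/-- The complement of the symmetry axis: `U = {x ∈ ℝ³ : x₁² + x₂² ≠ 0}`. -/
def axialU : Set (Fin 3 → ℝ) := {x | x 0 ^ 2 + x 1 ^ 2 ≠ 0}

/-- The gradient of a scalar function on `ℝ³`. -/
noncomputable def grad3 (ω : (Fin 3 → ℝ) → ℝ) (x : Fin 3 → ℝ) : Fin 3 → ℝ :=
  fun a => fderiv ℝ ω x (Pi.single a 1)

/-- The source vector `S = (1/λ) η × ∇ω` built from a scalar potential `ω`. -/
noncomputable def axialS (ω : (Fin 3 → ℝ) → ℝ) (x : Fin 3 → ℝ) : Fin 3 → ℝ :=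
  (1 / axialLam x) • cross3 (axialEta x) (grad3 ω x)

/-!
The field `η` is the linear map `x ↦ e₃ × x`, and `e₃ × ·` is a derivation of the cross
product (the Jacobi identity). Differentiating `η · ∇ω = 0` and using the symmetry of the
Hessian shows that `∇ω` commutes with `η`: `D_η ∇ω = η(∇ω)`. As `λ` is constant along `η`,
`D_η S = λ⁻¹ (η(η) × ∇ω + η × η(∇ω)) = η(S) = D_S η`, so `[η, S] = 0`. The divergence vanishes
by a direct computation: the Hessian terms cancel by symmetry, and `∇(λ⁻¹) · (η × ∇ω)`
cancels `λ⁻¹ ∇ω · curl η`.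
-/

open Matrix

section BilinearFDeriv

variable {𝕜 : Type*} [NontriviallyNormedField 𝕜] [CompleteSpace 𝕜]
  {E F G H : Type*} [NormedAddCommGroup E] [NormedSpace 𝕜 E] [FiniteDimensional 𝕜 E]
  [NormedAddCommGroup F] [NormedSpace 𝕜 F] [FiniteDimensional 𝕜 F]
  [NormedAddCommGroup G] [NormedSpace 𝕜 G] [NormedAddCommGroup H] [NormedSpace 𝕜 H]
  (B : E →ₗ[𝕜] F →ₗ[𝕜] G) {f : H → E} {g : H → F} {x : H}

def LinearMap.toContinuousBilinear : E →L[𝕜] F →L[𝕜] G :=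
  LinearMap.toContinuousLinearMap (LinearMap.toContinuousLinearMap.toLinearMap ∘ₗ B)

theorem LinearMap.differentiableAt_bilinear (hf : DifferentiableAt 𝕜 f x)
    (hg : DifferentiableAt 𝕜 g x) : DifferentiableAt 𝕜 (fun y => B (f y) (g y)) x :=
  (B.toContinuousBilinear.hasFDerivAt_of_bilinear hf.hasFDerivAt hg.hasFDerivAt).differentiableAt

theorem LinearMap.fderiv_bilinear_apply (hf : DifferentiableAt 𝕜 f x)
    (hg : DifferentiableAt 𝕜 g x) (v : H) :
    fderiv 𝕜 (fun y => B (f y) (g y)) x v =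
      B (fderiv 𝕜 f x v) (g x) + B (f x) (fderiv 𝕜 g x v) := by
  change fderiv 𝕜 (fun y => B.toContinuousBilinear (f y) (g y)) x v = _
  rw [ContinuousLinearMap.fderiv_of_bilinear _ hf hg]
  simp [LinearMap.toContinuousBilinear, add_comm]

end BilinearFDeriv

theorem ContDiffAt.differentiableAt_fderiv {𝕜 E F : Type*} [NontriviallyNormedField 𝕜]
    [NormedAddCommGroup E] [NormedSpace 𝕜 E] [NormedAddCommGroup F] [NormedSpace 𝕜 F]
    {f : E → F} {x : E} {n : WithTop ℕ∞} (hf : ContDiffAt 𝕜 n f x) (hn : 2 ≤ n) :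
    DifferentiableAt 𝕜 (fderiv 𝕜 f) x :=
  (hf.fderiv_right (m := 1) hn).differentiableAt one_ne_zero

theorem fderiv_apply_apply {𝕜 ι E : Type*} [NontriviallyNormedField 𝕜] [Fintype ι]
    [NormedAddCommGroup E] [NormedSpace 𝕜 E] {Φ : E → ι → 𝕜} {x : E}
    (hΦ : DifferentiableAt 𝕜 Φ x) (i : ι) (v : E) :
    fderiv 𝕜 (fun y => Φ y i) x v = fderiv 𝕜 Φ x v i := by
  rw [fderiv_apply hΦ]
  rfl

theorem sum_mul_apply_single {R ι F : Type*} [CommSemiring R] [Fintype ι] [DecidableEq ι]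
    [FunLike F (ι → R) R] [LinearMapClass F R (ι → R) R] (L : F) (w : ι → R) :
    ∑ i, w i * L (Pi.single i 1) = L w := by
  conv_rhs => rw [pi_eq_sum_univ' w]
  simp [map_sum]

theorem isOpen_axialU : IsOpen axialU :=
  isOpen_compl_singleton.preimage (by fun_prop)

theorem cross3_eq_cross (u v : Fin 3 → ℝ) : cross3 u v = u ⨯₃ v := rfl

theorem axialEta_eq_cross (x : Fin 3 → ℝ) : axialEta x = ![0, 0, 1] ⨯₃ x := by
  ext i; fin_cases i <;> simp [axialEta, cross_apply]

noncomputable def axialEtaCLM : (Fin 3 → ℝ) →L[ℝ] Fin 3 → ℝ :=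
  LinearMap.toContinuousLinearMap (crossProduct ![0, 0, 1])

theorem coe_axialEtaCLM : ⇑axialEtaCLM = axialEta :=
  funext fun x => (axialEta_eq_cross x).symm

theorem differentiable_axialEta : Differentiable ℝ axialEta :=
  coe_axialEtaCLM ▸ axialEtaCLM.differentiable

theorem fderiv_axialEta_apply (x v : Fin 3 → ℝ) : fderiv ℝ axialEta x v = axialEta v := by
  rw [← coe_axialEtaCLM, ContinuousLinearMap.fderiv]

theorem axialEta_dotProduct (u w : Fin 3 → ℝ) : axialEta u ⬝ᵥ w = -(u ⬝ᵥ axialEta w) := by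
  simp [axialEta, dotProduct, Fin.sum_univ_three]

theorem dotProduct_axialEta_self (u : Fin 3 → ℝ) : u ⬝ᵥ axialEta u = 0 := by
  rw [axialEta_eq_cross, dot_cross_self]

theorem axialLam_eq_dotProduct : axialLam = fun x => axialEta x ⬝ᵥ axialEta x := by
  funext x
  simp only [axialLam, axialEta, dotProduct, Fin.sum_univ_three, cons_val_zero, cons_val_one,
    cons_val]
  ring

theorem differentiableAt_axialLam (x : Fin 3 → ℝ) : DifferentiableAt ℝ axialLam x := by
  rw [axialLam_eq_dotProduct]
  exact (dotProductBilin ℝ ℝ).differentiableAt_bilinear (differentiable_axialEta x)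
    (differentiable_axialEta x)

theorem fderiv_axialLam_apply (x v : Fin 3 → ℝ) :
    fderiv ℝ axialLam x v = 2 * (axialEta x ⬝ᵥ axialEta v) := by
  have h := (dotProductBilin ℝ ℝ).fderiv_bilinear_apply (differentiable_axialEta x)
    (differentiable_axialEta x) v
  simp only [dotProductBilin_apply_apply, fderiv_axialEta_apply] at h
  rw [axialLam_eq_dotProduct, h, dotProduct_comm (axialEta v)]
  ring

section Potential

variable {ω : (Fin 3 → ℝ) → ℝ} {x : Fin 3 → ℝ}

theorem ContDiffAt.fderiv_grad3_apply (hω : ContDiffAt ℝ 2 ω x) (u : Fin 3 → ℝ) (a : Fin 3) :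
    fderiv ℝ (fun y => grad3 ω y a) x u = fderiv ℝ (fderiv ℝ ω) x u (Pi.single a 1) := by
  change fderiv ℝ (fun y => fderiv ℝ ω y (Pi.single a 1)) x u = _
  rw [fderiv_clm_apply (hω.differentiableAt_fderiv le_rfl) (differentiableAt_const _)]
  simp

theorem ContDiffAt.differentiableAt_grad3 (hω : ContDiffAt ℝ 2 ω x) :
    DifferentiableAt ℝ (grad3 ω) x :=
  differentiableAt_pi.2 fun _ =>
    (hω.differentiableAt_fderiv le_rfl).clm_apply (differentiableAt_const _)

theorem ContDiffAt.fderiv_grad3_dotProduct (hω : ContDiffAt ℝ 2 ω x) (u w : Fin 3 → ℝ) :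
    fderiv ℝ (grad3 ω) x u ⬝ᵥ w = fderiv ℝ (fderiv ℝ ω) x u w := by
  rw [dotProduct_comm, ← sum_mul_apply_single (fderiv ℝ (fderiv ℝ ω) x u) w]
  simp [dotProduct, ← fderiv_apply_apply hω.differentiableAt_grad3, hω.fderiv_grad3_apply]

theorem ContDiffAt.fderiv_grad3_dotProduct_comm (hω : ContDiffAt ℝ 2 ω x) (u w : Fin 3 → ℝ) :
    fderiv ℝ (grad3 ω) x u ⬝ᵥ w = fderiv ℝ (grad3 ω) x w ⬝ᵥ u := by
  rw [hω.fderiv_grad3_dotProduct, hω.fderiv_grad3_dotProduct,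
    (hω.isSymmSndFDerivAt (by simp)) u w]

theorem fderiv_grad3_axialEta (hω : ContDiffOn ℝ 2 ω axialU)
    (haxi : ∀ y ∈ axialU, axialEta y ⬝ᵥ grad3 ω y = 0) (hx : x ∈ axialU) :
    fderiv ℝ (grad3 ω) x (axialEta x) = axialEta (grad3 ω x) := by
  have hC : ContDiffAt ℝ 2 ω x := hω.contDiffAt (isOpen_axialU.mem_nhds hx)
  have hflat (v : Fin 3 → ℝ) :
      axialEta v ⬝ᵥ grad3 ω x + axialEta x ⬝ᵥ fderiv ℝ (grad3 ω) x v = 0 := by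
    have hloc : (fun y => axialEta y ⬝ᵥ grad3 ω y) =ᶠ[nhds x] fun _ => 0 := by
      filter_upwards [isOpen_axialU.mem_nhds hx] using haxi
    have h := (dotProductBilin ℝ ℝ).fderiv_bilinear_apply (differentiable_axialEta x)
      hC.differentiableAt_grad3 v
    simp only [dotProductBilin_apply_apply, fderiv_axialEta_apply] at h
    rw [← h, hloc.fderiv_eq]
    simp
  ext b
  calc fderiv ℝ (grad3 ω) x (axialEta x) b
      = fderiv ℝ (grad3 ω) x (axialEta x) ⬝ᵥ Pi.single b 1 := (dotProduct_single_one _ _).symm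
    _ = axialEta x ⬝ᵥ fderiv ℝ (grad3 ω) x (Pi.single b 1) := by
      rw [hC.fderiv_grad3_dotProduct_comm, dotProduct_comm]
    _ = -(axialEta (Pi.single b 1) ⬝ᵥ grad3 ω x) := eq_neg_of_add_eq_zero_right (hflat _)
    _ = axialEta (grad3 ω x) b := by
      rw [axialEta_dotProduct, neg_neg, single_one_dotProduct]

theorem axialS_eq_smul_cross :
    axialS ω = fun y => (axialLam y)⁻¹ • (axialEta y ⨯₃ grad3 ω y) := by
  funext y
  simp [axialS, one_div, cross3_eq_cross]

theorem axialS_dotProduct_axialEta : axialS ω x ⬝ᵥ axialEta x = 0 := by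
  rw [axialS_eq_smul_cross, smul_dotProduct, dotProduct_comm, dot_self_cross, smul_zero]

theorem ContDiffAt.differentiableAt_axialS (hω : ContDiffAt ℝ 2 ω x) (hx : x ∈ axialU) :
    DifferentiableAt ℝ (axialS ω) x := by
  rw [axialS_eq_smul_cross]
  exact ((differentiableAt_axialLam x).inv hx).smul
    (crossProduct.differentiableAt_bilinear (differentiable_axialEta x) hω.differentiableAt_grad3)

theorem ContDiffAt.fderiv_axialS_apply (hω : ContDiffAt ℝ 2 ω x) (hx : x ∈ axialU)
    (v : Fin 3 → ℝ) :
    fderiv ℝ (axialS ω) x v =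
      (-(2 * (axialEta x ⬝ᵥ axialEta v)) / axialLam x ^ 2) • (axialEta x ⨯₃ grad3 ω x) +
        (axialLam x)⁻¹ • (axialEta v ⨯₃ grad3 ω x + axialEta x ⨯₃ fderiv ℝ (grad3 ω) x v) := by
  have hinv : HasFDerivAt (fun y => (axialLam y)⁻¹)
      (-(axialLam x ^ 2)⁻¹ • fderiv ℝ axialLam x) x :=
    (hasDerivAt_inv hx).comp_hasFDerivAt x (differentiableAt_axialLam x).hasFDerivAt
  have hcross := crossProduct.differentiableAt_bilinear (differentiable_axialEta x)
    hω.differentiableAt_grad3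
  rw [axialS_eq_smul_cross, fderiv_fun_smul hinv.differentiableAt hcross, hinv.fderiv]
  simp only [_root_.add_apply, _root_.smul_apply, ContinuousLinearMap.smulRight_apply,
    crossProduct.fderiv_bilinear_apply (differentiable_axialEta x) hω.differentiableAt_grad3,
    fderiv_axialEta_apply, fderiv_axialLam_apply, smul_eq_mul]
  rw [add_comm]
  congr 1
  field_simp

theorem fderiv_axialS_axialEta (hω : ContDiffOn ℝ 2 ω axialU)
    (haxi : ∀ y ∈ axialU, axialEta y ⬝ᵥ grad3 ω y = 0) (hx : x ∈ axialU) :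
    fderiv ℝ (axialS ω) x (axialEta x) = axialEta (axialS ω x) := by
  have hC : ContDiffAt ℝ 2 ω x := hω.contDiffAt (isOpen_axialU.mem_nhds hx)
  rw [hC.fderiv_axialS_apply hx, fderiv_grad3_axialEta hω haxi hx, dotProduct_axialEta_self,
    axialS_eq_smul_cross]
  simp only [axialEta_eq_cross, ← leibniz_cross, map_smul]
  simp

theorem ContDiffAt.sum_fderiv_axialS_single (hω : ContDiffAt ℝ 2 ω x) (hx : x ∈ axialU) :
    ∑ a, fderiv ℝ (axialS ω) x (Pi.single a 1) a = 0 := by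
  have hsymm (a b : Fin 3) :
      fderiv ℝ (grad3 ω) x (Pi.single a 1) b = fderiv ℝ (grad3 ω) x (Pi.single b 1) a := by
    simpa [dotProduct_single_one] using
      hω.fderiv_grad3_dotProduct_comm (Pi.single a 1) (Pi.single b 1)
  have hlam : axialLam x ≠ 0 := hx
  simp only [Fin.sum_univ_three, hω.fderiv_axialS_apply hx]
  simp only [dotProduct, axialEta, cross_apply, Fin.sum_univ_three, Pi.add_apply, Pi.smul_apply,
    smul_eq_mul, Pi.single_eq_same, Pi.single_eq_of_ne, ne_eq, Fin.reduceEq, not_false_eq_true,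
    cons_val_zero, cons_val_one, cons_val]
  rw [hsymm 2 0, hsymm 2 1]
  field_simp
  simp only [axialLam]
  ring

end Potential

/-- For a `C²` axially symmetric potential `ω` on `U`, the vector field
`S = (1/λ)(η × ∇ω)` is orthogonal to `η`, divergence-free, and has vanishing Lie
bracket with `η` on `U`. -/
theorem axialS_orth_div_lie (ω : (Fin 3 → ℝ) → ℝ) (hω : ContDiffOn ℝ 2 ω axialU)
    (haxi : ∀ x ∈ axialU, ∑ a : Fin 3, axialEta x a * grad3 ω x a = 0) :
    (∀ x ∈ axialU, ∑ a : Fin 3, axialS ω x a * axialEta x a = 0) ∧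
      (∀ x ∈ axialU,
        ∑ a : Fin 3, fderiv ℝ (fun y => axialS ω y a) x (Pi.single a 1) = 0) ∧
      (∀ x ∈ axialU, ∀ a : Fin 3,
        (∑ b : Fin 3,
            axialEta x b * fderiv ℝ (fun y => axialS ω y a) x (Pi.single b 1)) -
          (∑ b : Fin 3,
            axialS ω x b * fderiv ℝ (fun y => axialEta y a) x (Pi.single b 1)) = 0) := by
  have hC {x} (hx : x ∈ axialU) : ContDiffAt ℝ 2 ω x := hω.contDiffAt (isOpen_axialU.mem_nhds hx)
  refine ⟨fun x _ => axialS_dotProduct_axialEta, fun x hx => ?_, fun x hx a => ?_⟩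
  · simp only [fderiv_apply_apply ((hC hx).differentiableAt_axialS hx)]
    exact (hC hx).sum_fderiv_axialS_single hx
  · rw [sum_mul_apply_single, sum_mul_apply_single,
      fderiv_apply_apply ((hC hx).differentiableAt_axialS hx),
      fderiv_apply_apply (differentiable_axialEta x),
      fderiv_axialS_axialEta hω haxi hx, fderiv_axialEta_apply, sub_self]
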